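/- Let X₁, X₂, ... be i.i.d. real random variables with E[X₁] < 0 and finite second moment. Then the first passage time λ∞ = inf{n ≥ 1 : X₁ + ... + Xₙ < 0} has finite expectation: E[λ∞] < ∞. -/

import Mathlib

open MeasureTheory ProbabilityTheory Filter Finset Topology
open scoped ENNReal

/-! Truncate the increments at `-M`, with `M` so large that `Y = max X (-M)` still has negative
mean; this can only delay the first passage. Let `A k` be the event that the walk of `Y` stays
nonnegative up to time `k`, so that `T ≤ ∑ₖ 1_{A k}`. The sum `∑_{k<n} Y k 1_{A k}` is the walk of
`Y` stopped at its first passage, hence is `≥ -M`: its last step starts from a nonnegative value.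
Since `A k` only depends on `Y 0, …, Y (k-1)`, taking expectations gives
`E[Y 0] ∑_{k<n} P(A k) ≥ -M`, whence `E[T] ≤ ∑ₖ P(A k) ≤ M / -E[Y 0]`. -/

def PartialSumsNonneg (x : ℕ → ℝ) (k : ℕ) : Prop :=
  ∀ m ≤ k, 0 ≤ ∑ i ∈ range m, x i

namespace PartialSumsNonneg

variable {x y : ℕ → ℝ} {j k : ℕ}

lemma anti (h : PartialSumsNonneg x k) (hjk : j ≤ k) : PartialSumsNonneg x j :=
  fun m hm => h m (hm.trans hjk)

lemma mono (h : PartialSumsNonneg x k) (hxy : ∀ i, x i ≤ y i) : PartialSumsNonneg y k :=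
  fun m hm => (h m hm).trans (sum_le_sum fun i _ => hxy i)

lemma of_lt_sInf (hk : k < sInf {n | 1 ≤ n ∧ ∑ i ∈ range n, x i < 0}) :
    PartialSumsNonneg x k := by
  intro m hm
  rcases Nat.eq_zero_or_pos m with rfl | hm0
  · simp
  · exact not_lt.1 fun hneg => Nat.notMem_of_lt_sInf (hm.trans_lt hk) ⟨hm0, hneg⟩

end PartialSumsNonneg

open scoped Classical in
lemma neg_le_sum_ite_partialSumsNonneg {x : ℕ → ℝ} {M : ℝ} (hM : 0 ≤ M)
    (hx : ∀ k, -M ≤ x k) (n : ℕ) :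
    -M ≤ ∑ k ∈ range n, if PartialSumsNonneg x k then x k else 0 := by
  induction n with
  | zero => simpa using hM
  | succ n ih =>
    rw [sum_range_succ]
    by_cases hn : PartialSumsNonneg x n
    · -- before the walk first goes negative, the sum is the walk itself
      have hstopped : ∑ k ∈ range n, (if PartialSumsNonneg x k then x k else 0)
          = ∑ k ∈ range n, x k :=
        sum_congr rfl fun k hk => if_pos (hn.anti (mem_range.1 hk).le)
      rw [hstopped, if_pos hn]
      linarith [hn n le_rfl, hx n]
    · simpa [hn] using ih

lemma measurable_sInf_setOf {α : Type*} [MeasurableSpace α] {p : ℕ → α → Prop}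
    (hp : ∀ n, Measurable (p n)) : Measurable fun a => sInf {n | p n a} := by
  classical
  refine measurable_to_countable' fun t => ?_
  have hpre : (fun a => sInf {n | p n a}) ⁻¹' {t}
      = {a | p t a ∧ ∀ m < t, ¬ p m a} ∪ {a | t = 0 ∧ ∀ n, ¬ p n a} := by
    ext a
    by_cases h : ∃ n, p n a
    · have hne : {n | p n a}.Nonempty := h
      simp [Nat.sInf_def hne, Nat.find_eq_iff, h]
    · simp only [not_exists] at h
      simp [h, eq_comm]
  rw [hpre]
  exact .union (measurableSet_setOfPred.2 (by fun_prop))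
    (measurableSet_setOfPred.2 (by fun_prop))

lemma lintegral_natCast_le_tsum_measure {Ω : Type*} [MeasurableSpace Ω] {μ : Measure Ω}
    {N : Ω → ℕ} {A : ℕ → Set Ω} (hA : ∀ k, MeasurableSet (A k))
    (hN : ∀ ω k, k < N ω → ω ∈ A k) :
    ∫⁻ ω, (N ω : ℝ≥0∞) ∂μ ≤ ∑' k, μ (A k) := by
  have hpointwise : ∀ ω, (N ω : ℝ≥0∞) ≤ ∑' k, (A k).indicator 1 ω := fun ω =>
    calc (N ω : ℝ≥0∞) = ∑ k ∈ range (N ω), (A k).indicator 1 ω := by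
          rw [sum_congr rfl fun k hk => Set.indicator_of_mem (hN ω k (mem_range.1 hk)) _]
          simp
      _ ≤ ∑' k, (A k).indicator 1 ω := ENNReal.sum_le_tsum _
  calc ∫⁻ ω, (N ω : ℝ≥0∞) ∂μ ≤ ∫⁻ ω, ∑' k, (A k).indicator 1 ω ∂μ :=
        lintegral_mono hpointwise
    _ = ∑' k, μ (A k) := by
        rw [lintegral_tsum fun k => (measurable_one.indicator (hA k)).aemeasurable]
        exact tsum_congr fun k => lintegral_indicator_one (hA k)

lemma tendsto_integral_max_neg_natCast {Ω : Type*} [MeasurableSpace Ω] {μ : Measure Ω}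
    {f : Ω → ℝ} (hf : Integrable f μ) :
    Tendsto (fun M : ℕ => ∫ ω, max (f ω) (-M) ∂μ) atTop (𝓝 (∫ ω, f ω ∂μ)) := by
  refine tendsto_integral_of_dominated_convergence (fun ω => ‖f ω‖)
    (fun M => hf.1.sup aestronglyMeasurable_const) hf.norm (fun M => ?_) ?_
  · filter_upwards with ω
    rw [Real.norm_eq_abs, Real.norm_eq_abs]
    exact abs_le.2 ⟨(neg_abs_le _).trans (le_max_left _ _),
      max_le (le_abs_self _) ((neg_nonpos.2 M.cast_nonneg).trans (abs_nonneg _))⟩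
  · filter_upwards with ω
    refine tendsto_const_nhds.congr' ?_
    filter_upwards [eventually_ge_atTop ⌈-f ω⌉₊] with M hM
    exact (max_eq_left (neg_le.1 (Nat.ceil_le.1 hM))).symm

lemma ProbabilityTheory.iIndepFun.indep_comap_iSup_lt {Ω ι β : Type*} [MeasurableSpace Ω]
    [MeasurableSpace β] [Preorder ι] {μ : Measure Ω} {X : ι → Ω → β}
    (hmeas : ∀ i, Measurable (X i)) (hindep : iIndepFun X μ) (k : ι) :
    Indep (MeasurableSpace.comap (X k) inferInstance)
      (⨆ i ∈ Set.Iio k, MeasurableSpace.comap (X i) inferInstance) μ := by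
  simpa using indep_iSup_of_disjoint (fun i => (hmeas i).comap_le) hindep.iIndep
    (S := {k}) (T := Set.Iio k) (by simp)

section RandomWalk

variable {Ω : Type*} {X : ℕ → Ω → ℝ}

lemma measurableSet_partialSumsNonneg_comap_lt (k : ℕ) :
    MeasurableSet[⨆ i ∈ Set.Iio k, MeasurableSpace.comap (X i) inferInstance]
      {ω | PartialSumsNonneg (X · ω) k} := by
  have hS : ∀ m ≤ k, Measurable[⨆ i ∈ Set.Iio k, MeasurableSpace.comap (X i) inferInstance]
      fun ω => ∑ i ∈ range m, X i ω := fun m hm =>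
    Finset.measurable_sum _ fun i hi => (comap_measurable (X i)).mono
      (le_iSup₂ (f := fun i _ => MeasurableSpace.comap (X i) inferInstance) i
        (Set.mem_Iio.2 ((mem_range.1 hi).trans_le hm))) le_rfl
  have hset : {ω | PartialSumsNonneg (X · ω) k}
      = ⋂ m ∈ Set.Iic k, {ω | 0 ≤ ∑ i ∈ range m, X i ω} := by
    ext ω
    simp [PartialSumsNonneg]
  rw [hset]
  exact .biInter (Set.to_countable _) fun m hm => measurableSet_le measurable_const (hS m hm)

variable [MeasurableSpace Ω] {μ : Measure Ω}

lemma measurableSet_partialSumsNonneg (hmeas : ∀ i, Measurable (X i)) (k : ℕ) :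
    MeasurableSet {ω | PartialSumsNonneg (X · ω) k} :=
  iSup₂_le (fun i _ => (hmeas i).comap_le) _ (measurableSet_partialSumsNonneg_comap_lt k)

lemma integral_indicator_partialSumsNonneg (hmeas : ∀ i, Measurable (X i)) (hindep : iIndepFun X μ)
    (hident : ∀ i, IdentDistrib (X i) (X 0) μ μ) (k : ℕ) :
    ∫ ω, {ω | PartialSumsNonneg (X · ω) k}.indicator (X k) ω ∂μ
      = (∫ ω, X 0 ω ∂μ) * μ.real {ω | PartialSumsNonneg (X · ω) k} := by
  set A := {ω | PartialSumsNonneg (X · ω) k}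
  have hA := measurableSet_partialSumsNonneg hmeas k
  have hAk : Measurable[⨆ i ∈ Set.Iio k, MeasurableSpace.comap (X i) inferInstance]
      (A.indicator (1 : Ω → ℝ)) :=
    measurable_const.indicator (measurableSet_partialSumsNonneg_comap_lt k)
  have hindepA : IndepFun (X k) (A.indicator (1 : Ω → ℝ)) μ :=
    (IndepFun_iff_Indep _ _ _).2 <|
      indep_of_indep_of_le_right (hindep.indep_comap_iSup_lt hmeas k) hAk.comap_le
  calc ∫ ω, A.indicator (X k) ω ∂μ = ∫ ω, (X k * A.indicator 1 : Ω → ℝ) ω ∂μ := by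
        simp only [Pi.mul_apply, ← Set.indicator_mul_right, Pi.one_apply, mul_one]
    _ = (∫ ω, X k ω ∂μ) * ∫ ω, A.indicator (1 : Ω → ℝ) ω ∂μ :=
        hindepA.integral_mul_eq_mul_integral (hmeas k).aestronglyMeasurable
          (measurable_const.indicator hA).aestronglyMeasurable
    _ = (∫ ω, X 0 ω ∂μ) * μ.real A := by
        rw [(hident k).integral_eq, integral_indicator_one hA]

lemma sum_measureReal_partialSumsNonneg_le [IsProbabilityMeasure μ]
    (hmeas : ∀ i, Measurable (X i)) (hindep : iIndepFun X μ)
    (hident : ∀ i, IdentDistrib (X i) (X 0) μ μ) (hint : Integrable (X 0) μ)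
    (hmean : ∫ ω, X 0 ω ∂μ < 0) {M : ℝ} (hM : 0 ≤ M) (hbdd : ∀ i ω, -M ≤ X i ω) (n : ℕ) :
    ∑ k ∈ range n, μ.real {ω | PartialSumsNonneg (X · ω) k} ≤ M / -∫ ω, X 0 ω ∂μ := by
  have hint_k : ∀ k ∈ range n,
      Integrable ({ω | PartialSumsNonneg (X · ω) k}.indicator (X k)) μ := fun k _ =>
    ((hident k).integrable_iff.2 hint).indicator (measurableSet_partialSumsNonneg hmeas k)
  have hpointwise : ∀ ω,
      -M ≤ ∑ k ∈ range n, {ω | PartialSumsNonneg (X · ω) k}.indicator (X k) ω := fun ω => by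
    classical
    simpa [Set.indicator_apply] using neg_le_sum_ite_partialSumsNonneg hM (hbdd · ω) n
  have hexpect : -M ≤ (∫ ω, X 0 ω ∂μ) * ∑ k ∈ range n,
      μ.real {ω | PartialSumsNonneg (X · ω) k} :=
    calc -M = ∫ _, -M ∂μ := by simp
      _ ≤ ∫ ω, ∑ k ∈ range n, {ω | PartialSumsNonneg (X · ω) k}.indicator (X k) ω ∂μ :=
          integral_mono (integrable_const _) (integrable_finsetSum _ hint_k) hpointwise
      _ = _ := by
          rw [integral_finsetSum _ hint_k, mul_sum]
          exact sum_congr rfl fun k _ =>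
            integral_indicator_partialSumsNonneg hmeas hindep hident k
  rw [le_div_iff₀ (neg_pos.2 hmean)]
  linarith

lemma tsum_measure_partialSumsNonneg_ne_top [IsProbabilityMeasure μ]
    (hmeas : ∀ i, Measurable (X i)) (hindep : iIndepFun X μ)
    (hident : ∀ i, IdentDistrib (X i) (X 0) μ μ) (hint : Integrable (X 0) μ)
    (hmean : ∫ ω, X 0 ω ∂μ < 0) {M : ℝ} (hM : 0 ≤ M) (hbdd : ∀ i ω, -M ≤ X i ω) :
    ∑' k, μ {ω | PartialSumsNonneg (X · ω) k} ≠ ∞ := by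
  have hsummable : Summable fun k => μ.real {ω | PartialSumsNonneg (X · ω) k} :=
    summable_of_sum_range_le (fun _ => measureReal_nonneg)
      (sum_measureReal_partialSumsNonneg_le hmeas hindep hident hint hmean hM hbdd)
  have hofReal := ENNReal.ofReal_tsum_of_nonneg (fun _ => measureReal_nonneg) hsummable
  simp only [measureReal_def, ne_eq, measure_ne_top, not_false_eq_true,
    ENNReal.ofReal_toReal] at hofReal
  exact hofReal ▸ ENNReal.ofReal_ne_top

end RandomWalk

theorem first_passage_integrable_general {Ω : Type*} [MeasurableSpace Ω] (μ : Measure Ω)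
    [IsProbabilityMeasure μ] (X : ℕ → Ω → ℝ) (hmeas : ∀ i, Measurable (X i))
    (hindep : iIndepFun X μ)
    (hident : ∀ i, IdentDistrib (X i) (X 0) μ μ)
    (hint : Integrable (X 0) μ) (hmean : ∫ ω, X 0 ω ∂μ < 0)
    (T : Ω → ℕ)
    (hTdef : ∀ ω, T ω = sInf {n : ℕ | 1 ≤ n ∧ ∑ i ∈ Finset.range n, X i ω < 0}) :
    Integrable (fun ω => (T ω : ℝ)) μ := by
  obtain ⟨M, hM⟩ : ∃ M : ℕ, ∫ ω, max (X 0 ω) (-M) ∂μ < 0 :=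
    ((tendsto_integral_max_neg_natCast hint).eventually_lt_const hmean).exists
  set Y : ℕ → Ω → ℝ := fun i ω => max (X i ω) (-M)
  have hYmeas : ∀ i, Measurable (Y i) := fun i => (hmeas i).max measurable_const
  have hTmeas : Measurable T := by
    rw [funext hTdef]
    exact measurable_sInf_setOf fun n => by fun_prop
  have hTsurv : ∀ ω k, k < T ω → ω ∈ {ω | PartialSumsNonneg (Y · ω) k} := fun ω k hk =>
    (PartialSumsNonneg.of_lt_sInf (hTdef ω ▸ hk)).mono fun i => le_max_left _ _
  have hfin : ∫⁻ ω, (T ω : ℝ≥0∞) ∂μ ≠ ∞ :=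
    ne_top_of_le_ne_top
      (tsum_measure_partialSumsNonneg_ne_top hYmeas
        (hindep.comp (fun _ x => max x (-M)) fun _ => measurable_id.max measurable_const)
        (fun i => (hident i).comp (measurable_id.max measurable_const))
        (hint.sup (integrable_const _)) hM M.cast_nonneg fun _ _ => le_max_right _ _)
      (lintegral_natCast_le_tsum_measure (measurableSet_partialSumsNonneg hYmeas) hTsurv)
  simpa using
    integrable_toReal_of_lintegral_ne_top (measurable_from_nat.comp hTmeas).aemeasurable hfin

/-- Negative-drift random walk with finite second moment: the first passage time below
zero has finite expectation. -/
theorem first_passage_integrable {Ω : Type*} [MeasurableSpace Ω] (μ : Measure Ω)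
    [IsProbabilityMeasure μ] (X : ℕ → Ω → ℝ) (hmeas : ∀ i, Measurable (X i))
    (hindep : iIndepFun X μ)
    (hident : ∀ i, IdentDistrib (X i) (X 0) μ μ)
    (hint : Integrable (X 0) μ) (hmean : ∫ ω, X 0 ω ∂μ < 0)
    (hmom2 : Integrable (fun ω => (X 0 ω) ^ 2) μ)
    (T : Ω → ℕ)
    (hTdef : ∀ ω, T ω = sInf {n : ℕ | 1 ≤ n ∧ ∑ i ∈ Finset.range n, X i ω < 0}) :
    Integrable (fun ω => (T ω : ℝ)) μ :=
  first_passage_integrable_general μ X hmeas hindep hident hint hmean T hTdef
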